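/- Let d ≥ 2 and consider the truncated point scheme V_d of S(1,1,1) (the set of d-tuples of nonzero vectors in k³ satisfying the multilinearized relations). A tuple (p₀,…,p_{d−1}) ∈ V_d admits two distinct witnesses (ω, parity-alternative) in the six-family decomposition of V_d — that is, it lies in at least two of the six families — if and only if there exist ω, ω' ∈ k with ω³ = ω'³ = 1 and ω ≠ ω' such that p_j is a nonzero scalar multiple of e_ω for every even j and a nonzero scalar multiple of e_{ω'} for every odd j. In particular, up to independent scaling of the coordinates, the singular locus of V_d consists of exactly six points. -/

import Mathlib

/-!
STATEMENT 12: For `d ≥ 2`, a tuple `(p₀,…,p_{d−1}) ∈ V_d` (for `S(1,1,1)`) admits two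
distinct witnesses `(ω, parity-alternative)` in the six-family decomposition of `V_d`
iff there exist cube roots of unity `ω ≠ ω'` such that `p_j` is a nonzero multiple of
`e_ω` for every even `j` and a nonzero multiple of `e_{ω'}` for every odd `j`.  In
particular the singular locus of `V_d` consists of exactly six points.
-/

/-- `p ∈ L_ω`, the line `x + ω²·y + ω·z = 0`. -/
def memL {k : Type*} [Field k] (ω : k) (p : Fin 3 → k) : Prop :=
  p 0 + ω ^ 2 * p 1 + ω * p 2 = 0

/-- `p` is a nonzero scalar multiple of `e_ω = (1, ω, ω²)`. -/
def isMultE {k : Type*} [Field k] (ω : k) (p : Fin 3 → k) : Prop :=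
  ∃ μ : k, μ ≠ 0 ∧ p 0 = μ ∧ p 1 = μ * ω ∧ p 2 = μ * ω ^ 2

/-- The six families of `V_d`: witness `(ω, alt)` with `ω³ = 1`; if `alt = true` the
even-indexed entries lie on `L_ω` and the odd-indexed ones are multiples of `e_ω`, and
conversely if `alt = false`. -/
def InFamily {k : Type*} [Field k] {d : ℕ} (p : Fin d → Fin 3 → k)
    (ω : k) (alt : Bool) : Prop :=
  ω ^ 3 = 1 ∧
    if alt then
      (∀ j : Fin d, Even j.val → memL ω (p j)) ∧
      (∀ j : Fin d, Odd j.val → isMultE ω (p j))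
    else
      (∀ j : Fin d, Even j.val → isMultE ω (p j)) ∧
      (∀ j : Fin d, Odd j.val → memL ω (p j))

/-!
The linear form of `L_ω'` takes the value `1 + η + η²` at `e_ω`, where `η = ω/ω'` is a cube
root of unity: this is `3 ≠ 0` if `ω = ω'` and `0` otherwise. So `e_ω` lies on `L_ω'` exactly
when `ω ≠ ω'`, and a multiple of `e_ω` determines `ω`. Hence two witnesses of the same parity
coincide (compare them at the index `0` or `1` where both prescribe multiples of `e`), while
witnesses `(ω, false)` and `(ω', true)` force `ω ≠ ω'` and every entry to be a multiple of
`e_ω` or `e_ω'`; conversely such a tuple lies in both families.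
-/

section SixFamilies

variable {k : Type*} [Field k]

theorem isMultE.unique {ω ω' : k} {p : Fin 3 → k} (h : isMultE ω p) (h' : isMultE ω' p) :
    ω = ω' := by
  obtain ⟨μ, hμ, h0, h1, -⟩ := h
  obtain ⟨ν, -, h0', h1', -⟩ := h'
  obtain rfl : μ = ν := h0.symm.trans h0'
  exact mul_left_cancel₀ hμ (h1.symm.trans h1')

theorem isMultE.not_memL (h3 : (3 : k) ≠ 0) {ω : k} (hω : ω ^ 3 = 1) {p : Fin 3 → k}
    (h : isMultE ω p) : ¬ memL ω p := by
  obtain ⟨μ, hμ, h0, h1, h2⟩ := h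
  intro hL
  have h3μ : 3 * μ = 0 := by
    unfold memL at hL
    rw [h0, h1, h2] at hL
    linear_combination hL - 2 * μ * hω
  exact hμ ((mul_eq_zero.mp h3μ).resolve_left h3)

theorem one_add_sq_mul_add_mul_sq_eq_zero {ω ω' : k} (hω : ω ^ 3 = 1) (hω' : ω' ^ 3 = 1)
    (hne : ω ≠ ω') : 1 + ω' ^ 2 * ω + ω' * ω ^ 2 = 0 := by
  have key : (ω - ω') * (1 + ω' ^ 2 * ω + ω' * ω ^ 2) = 0 := by
    linear_combination ω' * hω - ω * hω'
  exact (mul_eq_zero.mp key).resolve_left (sub_ne_zero.mpr hne)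

theorem isMultE.memL_of_ne {ω ω' : k} (hω : ω ^ 3 = 1) (hω' : ω' ^ 3 = 1) (hne : ω ≠ ω')
    {p : Fin 3 → k} (h : isMultE ω p) : memL ω' p := by
  obtain ⟨μ, -, h0, h1, h2⟩ := h
  unfold memL
  rw [h0, h1, h2]
  linear_combination μ * one_add_sq_mul_add_mul_sq_eq_zero hω hω' hne

variable {d : ℕ} {p : Fin d → Fin 3 → k}

theorem InFamily.eq_of_same_parity (hd : 2 ≤ d) {ω ω' : k} {alt : Bool}
    (h : InFamily p ω alt) (h' : InFamily p ω' alt) : ω = ω' := by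
  cases alt
  · exact (h.2.1 ⟨0, by omega⟩ Even.zero).unique (h'.2.1 ⟨0, by omega⟩ Even.zero)
  · exact (h.2.2 ⟨1, by omega⟩ odd_one).unique (h'.2.2 ⟨1, by omega⟩ odd_one)

theorem InFamily.ne_of_false_of_true (h3 : (3 : k) ≠ 0) (hd : 0 < d) {ω ω' : k}
    (h : InFamily p ω false) (h' : InFamily p ω' true) : ω ≠ ω' := by
  rintro rfl
  exact (h.2.1 ⟨0, hd⟩ Even.zero).not_memL h3 h.1 (h'.2.1 ⟨0, hd⟩ Even.zero)

theorem inFamily_false_and_true_of_isMultE {ω ω' : k} (hω : ω ^ 3 = 1) (hω' : ω' ^ 3 = 1)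
    (hne : ω ≠ ω') (heven : ∀ j : Fin d, Even j.val → isMultE ω (p j))
    (hodd : ∀ j : Fin d, Odd j.val → isMultE ω' (p j)) :
    InFamily p ω false ∧ InFamily p ω' true :=
  ⟨⟨hω, heven, fun j hj => (hodd j hj).memL_of_ne hω' hω hne.symm⟩,
    ⟨hω', fun j hj => (heven j hj).memL_of_ne hω hω' hne, hodd⟩⟩

end SixFamilies

theorem two_witnesses_iff_singular
    (k : Type*) [Field k] [CharZero k]
    (d : ℕ) (hd : 2 ≤ d)
    (p : Fin d → Fin 3 → k) :
    (∃ w₁ w₂ : k × Bool, w₁ ≠ w₂ ∧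
        InFamily p w₁.1 w₁.2 ∧ InFamily p w₂.1 w₂.2)
      ↔ ∃ ω ω' : k, ω ^ 3 = 1 ∧ ω' ^ 3 = 1 ∧ ω ≠ ω' ∧
          (∀ j : Fin d, Even j.val → isMultE ω (p j)) ∧
          (∀ j : Fin d, Odd j.val → isMultE ω' (p j)) := by
  have h3 : (3 : k) ≠ 0 := three_ne_zero
  constructor
  · rintro ⟨⟨ω₁, a₁⟩, ⟨ω₂, a₂⟩, hne, h₁, h₂⟩
    cases a₁ <;> cases a₂
    · exact absurd (congrArg (·, _) (h₁.eq_of_same_parity hd h₂)) hne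
    · exact ⟨ω₁, ω₂, h₁.1, h₂.1, h₁.ne_of_false_of_true h3 (by omega) h₂, h₁.2.1, h₂.2.2⟩
    · exact ⟨ω₂, ω₁, h₂.1, h₁.1, h₂.ne_of_false_of_true h3 (by omega) h₁, h₂.2.1, h₁.2.2⟩
    · exact absurd (congrArg (·, _) (h₁.eq_of_same_parity hd h₂)) hne
  · rintro ⟨ω, ω', hω, hω', hne, heven, hodd⟩
    exact ⟨(ω, false), (ω', true), by simp,
      inFamily_false_and_true_of_isMultE hω hω' hne heven hodd⟩
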